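/- Let 𝕊 : M₃ → M₃ be a linear map, ρ > 0, w ∈ ℝ³ a unit vector, and define E(w) : ℝ³ → ℝ³ by E(w)u = (𝕊[u ⊗ w]) w. Assume E(w) is symmetric and positive definite. Then there exist real numbers μ₁, μ₂, μ₃ > 0 and linearly independent vectors z₁, z₂, z₃ ∈ ℝ³ with E(w) z_i = μ_i z_i; and for each i, setting λ_i = √(μ_i / ρ) > 0 and Z_i^± = ∓(ρλ_i)⁻¹ (z_i ⊗ w), the pairs (Z_i^±, z_i) are nonzero solutions of the system −ρ⁻¹ (z ⊗ w) = λ Z, −(𝕊[Z]) w = λ z with λ = ±λ_i. In particular, the hyperbolicity matrix has exactly three linearly independent proper vectors z corresponding to non-null proper numbers, and all nonzero proper numbers are real, equal to ±√(μ_i/ρ). -/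
import Mathlib

open scoped RealInnerProductSpace

noncomputable section

abbrev M3 : Type := EuclideanSpace ℝ (Fin 3 × Fin 3)
abbrev R3 : Type := EuclideanSpace ℝ (Fin 3)

/-- The dyadic product `(z ⊗ w)_{ij} = z_i w_j`. -/
def dyad (z w : R3) : M3 :=
  (WithLp.equiv 2 ((Fin 3 × Fin 3) → ℝ)).symm fun ij => z ij.1 * w ij.2

/-- Matrix-vector product `(M w)_i = Σ_j M_{ij} w_j`. -/
def matVec (M : M3) (w : R3) : R3 :=
  (WithLp.equiv 2 (Fin 3 → ℝ)).symm fun i => ∑ j, M (i, j) * w j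

/-- The acoustic tensor `E(w) u = (𝕊[u ⊗ w]) w`. -/
def acoustic (S : M3 →ₗ[ℝ] M3) (w u : R3) : R3 :=
  matVec (S (dyad u w)) w

lemma dyad_add (z z' w : R3) : dyad (z + z') w = dyad z w + dyad z' w := by
  ext ij; simp [dyad, add_mul]

lemma dyad_smul (c : ℝ) (z w : R3) : dyad (c • z) w = c • dyad z w := by
  ext ij; simp [dyad, mul_assoc]

lemma matVec_add (M M' : M3) (w : R3) : matVec (M + M') w = matVec M w + matVec M' w := by
  ext i; simp [matVec, add_mul, Finset.sum_add_distrib]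

lemma matVec_smul (c : ℝ) (M : M3) (w : R3) : matVec (c • M) w = c • matVec M w := by
  ext i; simp [matVec, Finset.mul_sum, mul_assoc]

/-- The acoustic tensor `E(w) u = (𝕊[u ⊗ w]) w`. -/
def acousticL (S : M3 →ₗ[ℝ] M3) (w : R3) : R3 →ₗ[ℝ] R3 where
  toFun u := acoustic S w u
  map_add' u v := by simp [acoustic, dyad_add, map_add, matVec_add]
  map_smul' c u := by simp [acoustic, dyad_smul, map_smul, matVec_smul]

/-- Positive-eigenvalue part of Proposition 5: if the acoustic tensor `E(w)` is symmetric
and positive definite (strong ellipticity), then it has three positive eigenvalues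
`μ₁, μ₂, μ₃` with linearly independent eigenvectors `z₁, z₂, z₃`, and for each `i` and
each `λ = ±√(μ_i/ρ)` the pair `(Z_i^±, z_i)` with `Z_i^± = −(ρλ)⁻¹ (z_i ⊗ w)` is a
nonzero solution of the system `−ρ⁻¹ (z⊗w) = λZ`, `−(𝕊[Z])w = λz`. -/
theorem stmt14 (S : M3 →ₗ[ℝ] M3) (ρ : ℝ) (hρ : 0 < ρ)
    (w : R3) (hw : ‖w‖ = 1)
    (hsym : ∀ u u' : R3, ⟪acoustic S w u, u'⟫ = ⟪u, acoustic S w u'⟫)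
    (hpos : ∀ u : R3, u ≠ 0 → 0 < ⟪acoustic S w u, u⟫) :
    ∃ (μ : Fin 3 → ℝ) (z : Fin 3 → R3),
      (∀ i, 0 < μ i) ∧
      LinearIndependent ℝ z ∧
      (∀ i, acoustic S w (z i) = μ i • z i) ∧
      (∀ i, 0 < Real.sqrt (μ i / ρ)) ∧
      (∀ (i : Fin 3) (lam : ℝ),
        (lam = Real.sqrt (μ i / ρ) ∨ lam = -Real.sqrt (μ i / ρ)) →
          ((-ρ⁻¹) • dyad (z i) w = lam • ((-(ρ * lam)⁻¹) • dyad (z i) w) ∧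
           -(matVec (S ((-(ρ * lam)⁻¹) • dyad (z i) w)) w) = lam • z i) ∧
          (((-(ρ * lam)⁻¹) • dyad (z i) w, z i) : M3 × R3) ≠ 0) := by
  have hT : (acousticL S w).IsSymmetric := fun u v => hsym u v
  have hn : Module.finrank ℝ R3 = 3 := finrank_euclideanSpace_fin
  set b := hT.eigenvectorBasis hn with hb
  set μ := hT.eigenvalues hn with hμ
  have happ : ∀ i, acoustic S w (b i) = μ i • b i := fun i =>
    hT.apply_eigenvectorBasis hn i
  have hbnorm : ∀ i, ‖b i‖ = 1 := fun i => b.orthonormal.1 i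
  have hbne : ∀ i, b i ≠ 0 := fun i => by
    intro h; have := hbnorm i; rw [h] at this; simp at this
  have hμpos : ∀ i, 0 < μ i := by
    intro i
    have h := hpos (b i) (hbne i)
    rw [happ i, real_inner_smul_left, real_inner_self_eq_norm_sq, hbnorm i] at h
    simpa using h
  refine ⟨μ, b, hμpos, ?_, happ, ?_, ?_⟩
  · have := b.toBasis.linearIndependent
    simpa using this
  · intro i
    exact Real.sqrt_pos.mpr (div_pos (hμpos i) hρ)
  · intro i lam hlam
    have hlam2 : lam ^ 2 = μ i / ρ := by
      rcases hlam with h | h <;> rw [h] <;>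
        simp [Real.sq_sqrt (le_of_lt (div_pos (hμpos i) hρ))]
    have hlamne : lam ≠ 0 := by
      intro h
      rw [h] at hlam2
      have := div_pos (hμpos i) hρ
      simp [← hlam2] at this
    refine ⟨⟨?_, ?_⟩, ?_⟩
    · rw [smul_smul]
      congr 1
      field_simp
    · have hdef : matVec (S (dyad (b i) w)) w = μ i • b i := happ i
      rw [map_smul, matVec_smul, hdef, smul_smul, ← neg_smul]
      congr 1
      have hμi : μ i = ρ * lam ^ 2 := by
        rw [hlam2]
        field_simp
      rw [hμi]
      field_simp
    · intro h
      exact hbne i (congrArg Prod.snd h)
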